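/- Let a, α, β, γ, δ, ε, q be complex with 1 + α + β = γ + δ + ε, ε = -1, γ - 1 not a nonpositive integer, and a ∉ {0, 1}. Suppose q satisfies (q - aαβ + a(1-δ))(q - aαβ + (a-1)(1-γ)) - a(1-a)(1+α-γ)(1+β-γ) = 0. Then u(z) = ₂F₁(α, β; γ-1; z) + ((q - aαβ + a(1-δ))/((1-a)(γ-1))) ₂F₁(α, β; γ; z) satisfies the general Heun equation u'' + (γ/z + δ/(z-1) + ε/(z-a)) u' + (αβ z - q)/(z(z-1)(z-a)) u = 0 on the punctured unit disk avoiding 0, 1, a. -/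

import Mathlib

/-!
Both `F₁ = ₂F₁(α, β; γ - 1; z)` and `F₂ = ₂F₁(α, β; γ; z)` satisfy Gauss's equation, and they are
linked by the contiguous relation `(γ - 1) F₁ = (γ - 1) F₂ + z F₂'` and its derivative. For
`ε = -1` and `δ = 2 + α + β - γ`, these four relations reduce the Heun operator applied to
`F₁ + k F₂` to `F₂` times the quadratic equation for `q`, once `k` is chosen as in the statement.
All series are differentiated termwise on the unit disk.
-/

/-- The Gauss hypergeometric series `₂F₁(a, b; c; z)`. -/
noncomputable def gaussHyp (a b c z : ℂ) : ℂ :=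
  ∑' n : ℕ, ((ascPochhammer ℂ n).eval a * (ascPochhammer ℂ n).eval b /
    ((ascPochhammer ℂ n).eval c * (n.factorial : ℂ))) * z ^ n

open Filter Topology

def SummableOnUnitDisk (c : ℕ → ℂ) : Prop :=
  ∀ r : ℝ, 0 ≤ r → r < 1 → Summable fun n => ‖c n‖ * r ^ n

noncomputable def powerSum (c : ℕ → ℂ) (z : ℂ) : ℂ := ∑' n, c n * z ^ n

def derivCoeff (c : ℕ → ℂ) (n : ℕ) : ℂ := (n + 1) * c (n + 1)

variable {c c₁ c₂ : ℕ → ℂ} {z : ℂ}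

namespace SummableOnUnitDisk

theorem hasSum (hc : SummableOnUnitDisk c) (hz : ‖z‖ < 1) :
    HasSum (fun n => c n * z ^ n) (powerSum c z) :=
  (Summable.of_norm (by simpa only [norm_mul, norm_pow] using hc ‖z‖ (norm_nonneg z) hz)).hasSum

theorem deriv (hc : SummableOnUnitDisk c) : SummableOnUnitDisk (derivCoeff c) := by
  intro r hr₀ hr₁
  obtain ⟨s, hrs, hs₁⟩ := exists_between hr₁
  have hs₀ : 0 < s := hr₀.trans_lt hrs
  obtain ⟨M, hM⟩ : BddAbove (Set.range fun n => ‖c (n + 1)‖ * s ^ (n + 1)) :=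
    ((summable_nat_add_iff 1).2 (hc s hs₀.le hs₁)).tendsto_atTop_zero.bddAbove_range
  have hratio : ‖r / s‖ < 1 := by
    rwa [Real.norm_of_nonneg (by positivity), div_lt_one hs₀]
  have hgeom : Summable fun n : ℕ => ((n : ℝ) + 1) * (r / s) ^ n := by
    simpa only [pow_one, add_mul, one_mul] using
      (summable_pow_mul_geometric_of_norm_lt_one 1 hratio).add
        (summable_geometric_of_norm_lt_one hratio)
  refine .of_nonneg_of_le (fun n => by positivity) (fun n => ?_) (hgeom.mul_left (M / s))
  calc ‖derivCoeff c n‖ * r ^ n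
      = ((n : ℝ) + 1) * (r / s) ^ n * (‖c (n + 1)‖ * s ^ (n + 1)) / s := by
        rw [derivCoeff, norm_mul, div_pow, pow_succ]
        norm_cast
        field_simp
    _ ≤ ((n : ℝ) + 1) * (r / s) ^ n * M / s := by
        gcongr
        exact hM ⟨n, rfl⟩
    _ = M / s * (((n : ℝ) + 1) * (r / s) ^ n) := by ring

theorem hasSum_natCast_mul (hc : SummableOnUnitDisk c) (hz : ‖z‖ < 1) :
    HasSum (fun n : ℕ => n * c n * z ^ n) (z * powerSum (derivCoeff c) z) := by
  refine (hasSum_nat_add_iff' 1).1 ?_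
  rw [Finset.sum_range_one, Nat.cast_zero, zero_mul, zero_mul, sub_zero]
  refine ((hc.deriv.hasSum hz).mul_left z).congr_fun fun n => ?_
  simp only [derivCoeff]
  push_cast
  ring

theorem hasSum_natCast_mul_natCast_sub_one_mul (hc : SummableOnUnitDisk c) (hz : ‖z‖ < 1) :
    HasSum (fun n : ℕ => n * (n - 1) * c n * z ^ n)
      (z ^ 2 * powerSum (derivCoeff (derivCoeff c)) z) := by
  refine (hasSum_nat_add_iff' 1).1 ?_
  rw [Finset.sum_range_one, Nat.cast_zero, zero_mul, zero_mul, zero_mul, sub_zero, pow_two,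
    mul_assoc]
  refine ((hasSum_natCast_mul hc.deriv hz).mul_left z).congr_fun fun n => ?_
  simp only [derivCoeff]
  push_cast
  ring

theorem hasDerivAt (hc : SummableOnUnitDisk c) (hz : ‖z‖ < 1) :
    HasDerivAt (powerSum c) (powerSum (derivCoeff c) z) z := by
  obtain ⟨r, hzr, hr₁⟩ := exists_between hz
  have hr₀ : 0 < r := (norm_nonneg z).trans_lt hzr
  -- Splitting off `c 0` makes the termwise derivatives exactly `derivCoeff c n * w ^ n`.
  have htail : HasDerivAt (fun w => ∑' n, c (n + 1) * w ^ (n + 1))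
      (powerSum (derivCoeff c) z) z := by
    refine hasDerivAt_tsum_of_isPreconnected (g := fun n w => c (n + 1) * w ^ (n + 1))
      (g' := fun n w => derivCoeff c n * w ^ n) (hc.deriv r hr₀.le hr₁)
      Metric.isOpen_ball (convex_ball (0 : ℂ) r).isPreconnected (fun n w _ => ?_) (fun n w hw => ?_)
      (Metric.mem_ball_self hr₀) (by simp) (mem_ball_zero_iff.2 hzr)
    · refine ((hasDerivAt_pow (n + 1) w).const_mul (c (n + 1))).congr_deriv ?_
      rw [derivCoeff, Nat.add_sub_cancel]
      push_cast
      ring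
    · rw [norm_mul, norm_pow]
      gcongr
      exact (mem_ball_zero_iff.1 hw).le
  have heq : powerSum c =ᶠ[𝓝 z] fun w => c 0 + ∑' n, c (n + 1) * w ^ (n + 1) := by
    filter_upwards [Metric.isOpen_ball.mem_nhds (mem_ball_zero_iff.2 hz)] with w hw
    exact (hc.hasSum (mem_ball_zero_iff.1 hw)).summable.tsum_eq_zero_add.trans (by simp)
  exact (htail.const_add (c 0)).congr_of_eventuallyEq heq

theorem hypergeometric_ode (hc : SummableOnUnitDisk c) {t α β : ℂ}
    (hrec : ∀ n : ℕ, (n + 1) * (t + n) * c (n + 1) = (α + n) * (β + n) * c n) (hz : ‖z‖ < 1) :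
    z * (1 - z) * powerSum (derivCoeff (derivCoeff c)) z
      + (t - (α + β + 1) * z) * powerSum (derivCoeff c) z - α * β * powerSum c z = 0 := by
  have h := ((((hasSum_natCast_mul hc.deriv hz).sub
    (hasSum_natCast_mul_natCast_sub_one_mul hc hz)).add
    ((hc.deriv.hasSum hz).mul_left t)).sub
    ((hasSum_natCast_mul hc hz).mul_left (α + β + 1))).sub ((hc.hasSum hz).mul_left (α * β))
  have hterm : ∀ n : ℕ, n * derivCoeff c n * z ^ n - n * (n - 1) * c n * z ^ n
      + t * (derivCoeff c n * z ^ n) - (α + β + 1) * (n * c n * z ^ n)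
      - α * β * (c n * z ^ n) = 0 := fun n => by
    simp only [derivCoeff]
    linear_combination z ^ n * hrec n
  simp only [hterm] at h
  linear_combination h.unique hasSum_zero

theorem contiguous (hc₁ : SummableOnUnitDisk c₁) (hc₂ : SummableOnUnitDisk c₂) {A B : ℂ}
    (hcc : ∀ n : ℕ, A * c₁ n = (B + n) * c₂ n) (hz : ‖z‖ < 1) :
    A * powerSum c₁ z = B * powerSum c₂ z + z * powerSum (derivCoeff c₂) z := by
  refine ((hc₁.hasSum hz).mul_left A).unique ?_
  refine (((hc₂.hasSum hz).mul_left B).add (hasSum_natCast_mul hc₂ hz)).congr_fun fun n => ?_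
  linear_combination z ^ n * hcc n

theorem hasDerivAt_add_mul (hc₁ : SummableOnUnitDisk c₁) (hc₂ : SummableOnUnitDisk c₂) (k : ℂ)
    (hz : ‖z‖ < 1) :
    HasDerivAt (fun w => powerSum c₁ w + k * powerSum c₂ w)
      (powerSum (derivCoeff c₁) z + k * powerSum (derivCoeff c₂) z) z :=
  (hc₁.hasDerivAt hz).add ((hc₂.hasDerivAt hz).const_mul k)

end SummableOnUnitDisk

theorem hasDerivAt_deriv_of_eventually_hasDerivAt {𝕜 : Type*} [NontriviallyNormedField 𝕜]
    {f f' : 𝕜 → 𝕜} {f'' x : 𝕜} (hf : ∀ᶠ y in 𝓝 x, HasDerivAt f (f' y) y)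
    (hf' : HasDerivAt f' f'' x) :
    HasDerivAt (deriv f) f'' x :=
  hf'.congr_of_eventuallyEq (hf.mono fun _ hy => hy.deriv)

theorem derivCoeff_contiguous {A B : ℂ} (hcc : ∀ n : ℕ, A * c₁ n = (B + n) * c₂ n) (n : ℕ) :
    A * derivCoeff c₁ n = (B + 1 + n) * derivCoeff c₂ n := by
  have h := hcc (n + 1)
  push_cast at h
  simp only [derivCoeff]
  linear_combination (n + 1 : ℂ) * h

theorem gaussHyp_eq_powerSum (a b c z : ℂ) :
    gaussHyp a b c z = powerSum (ordinaryHypergeometricCoefficient a b c) z :=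
  tsum_congr fun n => by rw [div_eq_mul_inv, mul_inv]; ring

theorem one_le_radius_ordinaryHypergeometricSeries (a b c : ℂ) :
    1 ≤ (ordinaryHypergeometricSeries ℂ a b c).radius := by
  by_cases ha : ∃ k : ℕ, a = -k
  · obtain ⟨k, rfl⟩ := ha
    simp [ordinaryHypergeometric_radius_top_of_neg_nat₁]
  by_cases hb : ∃ k : ℕ, b = -k
  · obtain ⟨k, rfl⟩ := hb
    simp [ordinaryHypergeometric_radius_top_of_neg_nat₂]
  by_cases hc : ∃ k : ℕ, c = -k
  · obtain ⟨k, rfl⟩ := hc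
    simp [ordinaryHypergeometric_radius_top_of_neg_nat₃]
  push Not at ha hb hc
  refine (ordinaryHypergeometricSeries_radius_eq_one ℂ a b c fun k => ?_).ge
  exact ⟨fun h => ha k (by rw [h, neg_neg]), fun h => hb k (by rw [h, neg_neg]),
    fun h => hc k (by rw [h, neg_neg])⟩

theorem summableOnUnitDisk_of_one_le_radius
    (h : 1 ≤ (FormalMultilinearSeries.ofScalars ℂ c).radius) : SummableOnUnitDisk c := by
  intro r hr₀ hr₁
  have hr : (r.toNNReal : ENNReal) < (FormalMultilinearSeries.ofScalars ℂ c).radius :=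
    lt_of_lt_of_le (by exact_mod_cast Real.toNNReal_lt_one.2 hr₁) h
  simpa only [FormalMultilinearSeries.ofScalars_norm, Real.coe_toNNReal _ hr₀] using
    (FormalMultilinearSeries.ofScalars ℂ c).summable_norm_mul_pow hr

theorem summableOnUnitDisk_ordinaryHypergeometricCoefficient (a b c : ℂ) :
    SummableOnUnitDisk (ordinaryHypergeometricCoefficient a b c) :=
  summableOnUnitDisk_of_one_le_radius (one_le_radius_ordinaryHypergeometricSeries a b c)

theorem ascPochhammer_eval_ne_zero {c : ℂ} (hc : ∀ k : ℕ, c ≠ -k) (n : ℕ) :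
    (ascPochhammer ℂ n).eval c ≠ 0 := fun h => by
  obtain ⟨k, -, hk⟩ := (ascPochhammer_eval_eq_zero_iff n c).1 h
  exact hc k (by rw [hk, neg_neg])

theorem ordinaryHypergeometricCoefficient_succ (a b : ℂ) {c : ℂ} (hc : ∀ k : ℕ, c ≠ -k)
    (n : ℕ) : (n + 1) * (c + n) * ordinaryHypergeometricCoefficient a b c (n + 1)
      = (a + n) * (b + n) * ordinaryHypergeometricCoefficient a b c n := by
  have hpoch := ascPochhammer_eval_ne_zero hc n
  have hcn : c + n ≠ 0 := fun h => hc n (by linear_combination h)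
  have hfact : (n.factorial : ℂ) ≠ 0 := Nat.cast_ne_zero.2 n.factorial_ne_zero
  simp only [ordinaryHypergeometricCoefficient, ascPochhammer_succ_eval, Nat.factorial_succ]
  push_cast
  field_simp

theorem ordinaryHypergeometricCoefficient_sub_one (a b : ℂ) {c : ℂ}
    (hc : ∀ k : ℕ, c - 1 ≠ -k) (n : ℕ) :
    (c - 1) * ordinaryHypergeometricCoefficient a b (c - 1) n
      = (c - 1 + n) * ordinaryHypergeometricCoefficient a b c n := by
  have hc' : ∀ k : ℕ, c ≠ -k := fun k h => hc (k + 1) (by push_cast; linear_combination h)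
  have hpoch : (ascPochhammer ℂ n).eval (c - 1) * (c - 1 + n)
      = (c - 1) * (ascPochhammer ℂ n).eval c := by
    rw [← ascPochhammer_succ_eval, ascPochhammer_succ_left]
    simp
  have hpoch₁ := ascPochhammer_eval_ne_zero hc n
  have hpoch₂ := ascPochhammer_eval_ne_zero hc' n
  have hfact : (n.factorial : ℂ) ≠ 0 := Nat.cast_ne_zero.2 n.factorial_ne_zero
  simp only [ordinaryHypergeometricCoefficient]
  field_simp
  linear_combination -(ascPochhammer ℂ n).eval a * (ascPochhammer ℂ n).eval b * hpoch

theorem heun_of_gauss_contiguous (a α β γ q k z F₁ D₁ DD₁ F₂ D₂ DD₂ : ℂ)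
    (hk : k * ((1 - a) * (γ - 1)) = q - a * α * β + a * (1 - (2 + α + β - γ)))
    (hq : (q - a * α * β + a * (1 - (2 + α + β - γ))) * (q - a * α * β + (a - 1) * (1 - γ))
        - a * (1 - a) * (1 + α - γ) * (1 + β - γ) = 0)
    (hgauss₁ : z * (1 - z) * DD₁ + (γ - 1 - (α + β + 1) * z) * D₁ - α * β * F₁ = 0)
    (hgauss₂ : z * (1 - z) * DD₂ + (γ - (α + β + 1) * z) * D₂ - α * β * F₂ = 0)
    (hcontig : (γ - 1) * F₁ = (γ - 1) * F₂ + z * D₂)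
    (hcontig' : (γ - 1) * D₁ = (γ - 1 + 1) * D₂ + z * DD₂)
    (hz₀ : z ≠ 0) (hz₁ : z ≠ 1) (hza : z ≠ a) (ha : a ≠ 1) (hγ : γ - 1 ≠ 0) :
    DD₁ + k * DD₂ + (γ / z + (2 + α + β - γ) / (z - 1) + (-1) / (z - a)) * (D₁ + k * D₂)
      + (α * β * z - q) / (z * (z - 1) * (z - a)) * (F₁ + k * F₂) = 0 := by
  have ha' : (1 : ℂ) - a ≠ 0 := sub_ne_zero.2 ha.symm
  have hz₁' : z - 1 ≠ 0 := sub_ne_zero.2 hz₁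
  have hza' : z - a ≠ 0 := sub_ne_zero.2 hza
  have key : ((1 - a) * (γ - 1)) *
      (z * (z - 1) * (z - a) * (DD₁ + k * DD₂)
        + (γ * (z - 1) * (z - a) + (2 + α + β - γ) * z * (z - a) - z * (z - 1)) * (D₁ + k * D₂)
        + (α * β * z - q) * (F₁ + k * F₂)) = 0 := by
    linear_combination ((1 - a) * (γ - 1) * (-(z - a))) * hgauss₁
      + (-(1 - a) * (γ - 1) * k * (z - a) + a * (1 - a)) * hgauss₂
      + ((1 - a) * (a * α * β - q)) * hcontig
      + (-a * (z - 1) * (1 - a)) * hcontig'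
      + (z * (1 - a) * D₂ + (a * α * β - q) * F₂) * hk
      - F₂ * hq
  field_simp
  linear_combination (mul_eq_zero.1 key).resolve_left (mul_ne_zero ha' hγ)

theorem heun_two_hypergeometric_solution_general
    (a α β γ δ ε q : ℂ) (hF : 1 + α + β = γ + δ + ε) (hε : ε = -1)
    (hγ : ∀ m : ℕ, γ - 1 ≠ -(m : ℂ)) (ha1 : a ≠ 1)
    (hq : (q - a * α * β + a * (1 - δ)) * (q - a * α * β + (a - 1) * (1 - γ))
            - a * (1 - a) * (1 + α - γ) * (1 + β - γ) = 0)
    (u : ℂ → ℂ)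
    (hu : ∀ z, u z = gaussHyp α β (γ - 1) z
        + ((q - a * α * β + a * (1 - δ)) / ((1 - a) * (γ - 1))) * gaussHyp α β γ z) :
    ∀ z : ℂ, ‖z‖ < 1 → z ≠ 0 → z ≠ 1 → z ≠ a →
      deriv (deriv u) z
        + (γ / z + δ / (z - 1) + ε / (z - a)) * deriv u z
        + (α * β * z - q) / (z * (z - 1) * (z - a)) * u z = 0 := by
  intro z hz hz₀ hz₁ hza
  subst hε
  obtain rfl : δ = 2 + α + β - γ := by linear_combination -hF
  have hγ₀ : γ - 1 ≠ 0 := by simpa using hγ 0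
  have hγ' : ∀ m : ℕ, γ ≠ -(m : ℂ) := fun m h => hγ (m + 1) (by push_cast; linear_combination h)
  set c₁ := ordinaryHypergeometricCoefficient α β (γ - 1)
  set c₂ := ordinaryHypergeometricCoefficient α β γ
  have hc₁ := summableOnUnitDisk_ordinaryHypergeometricCoefficient α β (γ - 1)
  have hc₂ := summableOnUnitDisk_ordinaryHypergeometricCoefficient α β γ
  set k := (q - a * α * β + a * (1 - (2 + α + β - γ))) / ((1 - a) * (γ - 1))
  obtain rfl : u = fun w => powerSum c₁ w + k * powerSum c₂ w :=
    funext fun w => by rw [hu, gaussHyp_eq_powerSum, gaussHyp_eq_powerSum]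
  have hu' : ∀ᶠ w in 𝓝 z, HasDerivAt (fun w => powerSum c₁ w + k * powerSum c₂ w)
      (powerSum (derivCoeff c₁) w + k * powerSum (derivCoeff c₂) w) w :=
    eventually_of_mem (isOpen_lt continuous_norm continuous_const |>.mem_nhds hz)
      fun w hw => hc₁.hasDerivAt_add_mul hc₂ k hw
  have hu'' := hasDerivAt_deriv_of_eventually_hasDerivAt hu'
    (hc₁.deriv.hasDerivAt_add_mul hc₂.deriv k hz)
  rw [hu''.deriv, hu'.self_of_nhds.deriv]
  exact heun_of_gauss_contiguous a α β γ q k z _ _ _ _ _ _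
    (div_mul_cancel₀ _ (mul_ne_zero (sub_ne_zero.2 ha1.symm) hγ₀)) hq
    (hc₁.hypergeometric_ode (ordinaryHypergeometricCoefficient_succ α β hγ) hz)
    (hc₂.hypergeometric_ode (ordinaryHypergeometricCoefficient_succ α β hγ') hz)
    (hc₁.contiguous hc₂ (ordinaryHypergeometricCoefficient_sub_one α β hγ) hz)
    (hc₁.deriv.contiguous hc₂.deriv
      (derivCoeff_contiguous (ordinaryHypergeometricCoefficient_sub_one α β hγ)) hz)
    hz₀ hz₁ hza ha1 hγ₀

/-- for `ε = -1` and `q` a root of the displayed quadratic equation,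
the two-term combination of hypergeometric functions solves the general Heun
equation on the unit disk punctured at `0`, `1`, `a`. -/
theorem heun_two_hypergeometric_solution
    (a α β γ δ ε q : ℂ) (hF : 1 + α + β = γ + δ + ε) (hε : ε = -1)
    (hγ : ∀ m : ℕ, γ - 1 ≠ -(m : ℂ)) (ha0 : a ≠ 0) (ha1 : a ≠ 1)
    (hq : (q - a * α * β + a * (1 - δ)) * (q - a * α * β + (a - 1) * (1 - γ))
            - a * (1 - a) * (1 + α - γ) * (1 + β - γ) = 0)
    (u : ℂ → ℂ)
    (hu : ∀ z, u z = gaussHyp α β (γ - 1) z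
        + ((q - a * α * β + a * (1 - δ)) / ((1 - a) * (γ - 1))) * gaussHyp α β γ z) :
    ∀ z : ℂ, ‖z‖ < 1 → z ≠ 0 → z ≠ 1 → z ≠ a →
      deriv (deriv u) z
        + (γ / z + δ / (z - 1) + ε / (z - a)) * deriv u z
        + (α * β * z - q) / (z * (z - 1) * (z - a)) * u z = 0 :=
  heun_two_hypergeometric_solution_general a α β γ δ ε q hF hε hγ ha1 hq u hu
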